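/- arXiv:1208.1897 — 9 statements merged into one kernel-verified Lean document; each statement's English description precedes it below -/
import Mathlib

section
/- Let V be a left R-module and let X and Y be distinct proper R-submodules of V. There is no path in the intersection graph G(V) between X and Y if and only if X and Y are simple R-submodules of V and V = X ⊕ Y. -/
/-- The vertices of the intersection graph: proper submodules of `V`. -/
def ProperSubmodule (R V : Type*) [Ring R] [AddCommGroup V] [Module R V] :=
  {W : Submodule R V // W ≠ ⊥ ∧ W ≠ ⊤}

/-- The intersection graph of proper submodules of `V`: two distinct proper
submodules are adjacent iff their intersection is nonzero. -/
def intersectionGraph (R V : Type*) [Ring R] [AddCommGroup V] [Module R V] :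
    SimpleGraph (ProperSubmodule R V) where
  Adj U W := U ≠ W ∧ U.1 ⊓ W.1 ≠ ⊥
  symm := by
    constructor
    intro U W h
    exact ⟨h.1.symm, by rw [inf_comm]; exact h.2⟩
  loopless := ⟨fun U h => h.1 rfl⟩

/-! If `X` and `Y` lie in different components of `G(V)`, no proper submodule meets both of
them. Taking `X ⊔ Y`, resp. `B ⊔ Y` for `0 ≠ B ≤ X`, shows `X ⊕ Y = V` and `B ⊕ Y = V`, and the
modular law then gives `B = X`, so `X` (and likewise `Y`) is simple. Conversely, a proper submodule
meeting `X` contains `X`, misses `Y` (else it would contain `X ⊕ Y = V`), and hence equals `X` by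
the modular law: `X` is an isolated vertex. -/

theorem IsCompl.eq_of_not_disjoint_left {α : Type*} [Lattice α] [BoundedOrder α]
    [IsModularLattice α] {a b w : α} (hab : IsCompl a b) (ha : IsAtom a) (hb : IsAtom b)
    (haw : ¬ Disjoint a w) (hw : w ≠ ⊤) : a = w := by
  have haw : a ≤ w := ha.not_disjoint_iff_le.mp haw
  have hbw : Disjoint b w := hb.not_le_iff_disjoint.mp fun hbw ↦
    hw (top_le_iff.mp (hab.sup_eq_top ▸ sup_le haw hbw))
  exact (le_iff_eq_of_codisjoint_of_disjoint hab.codisjoint hbw).mp haw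

namespace intersectionGraph

variable {R V : Type*} [Ring R] [AddCommGroup V] [Module R V]

theorem reachable_of_not_disjoint {x y : ProperSubmodule R V} (h : ¬ Disjoint x.1 y.1) :
    (intersectionGraph R V).Reachable x y := by
  by_cases hxy : x = y
  · exact hxy ▸ SimpleGraph.Reachable.refl x
  · exact SimpleGraph.Adj.reachable ⟨hxy, fun h' ↦ h (disjoint_iff.mpr h')⟩

theorem eq_top_of_not_reachable {x y : ProperSubmodule R V}
    (h : ¬ (intersectionGraph R V).Reachable x y) {W : Submodule R V}
    (hx : ¬ Disjoint x.1 W) (hy : ¬ Disjoint W y.1) : W = ⊤ := by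
  by_contra hW
  let z : ProperSubmodule R V := ⟨W, fun h ↦ hx (by simp [h]), hW⟩
  exact h ((reachable_of_not_disjoint (y := z) hx).trans (reachable_of_not_disjoint hy))

theorem disjoint_of_not_reachable {x y : ProperSubmodule R V}
    (h : ¬ (intersectionGraph R V).Reachable x y) : Disjoint x.1 y.1 :=
  by_contra fun hxy ↦ x.2.2 (eq_top_of_not_reachable h (by simpa using x.2.1) hxy)

theorem codisjoint_of_not_reachable_of_le {x y : ProperSubmodule R V}
    (h : ¬ (intersectionGraph R V).Reachable x y) {b : Submodule R V} (hbx : b ≤ x.1)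
    (hb : b ≠ ⊥) : Codisjoint b y.1 :=
  codisjoint_iff.mpr <| eq_top_of_not_reachable h
    (fun hd ↦ hb (disjoint_self.mp ((hd.mono_right le_sup_left).mono_left hbx)))
    (fun hd ↦ y.2.1 (disjoint_self.mp (hd.mono_left le_sup_right)))

theorem isAtom_of_not_reachable {x y : ProperSubmodule R V}
    (h : ¬ (intersectionGraph R V).Reachable x y) : IsAtom x.1 := by
  refine ⟨x.2.1, fun b hbx ↦ by_contra fun hb ↦ hbx.ne ?_⟩
  exact (le_iff_eq_of_codisjoint_of_disjoint (codisjoint_of_not_reachable_of_le h hbx.le hb)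
    (disjoint_of_not_reachable h).symm).mp hbx.le

theorem not_adj_of_isCompl {x y : ProperSubmodule R V} (hx : IsAtom x.1) (hy : IsAtom y.1)
    (hxy : IsCompl x.1 y.1) (w : ProperSubmodule R V) : ¬ (intersectionGraph R V).Adj x w :=
  fun ⟨hxw, hd⟩ ↦ hxw <| Subtype.ext <|
    hxy.eq_of_not_disjoint_left hx hy (fun h ↦ hd (disjoint_iff.mp h)) w.2.2

end intersectionGraph

theorem stmt0 (R V : Type*) [Ring R] [AddCommGroup V] [Module R V]
    (x y : ProperSubmodule R V) (hxy : x ≠ y) :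
    ¬ (intersectionGraph R V).Reachable x y ↔
      IsSimpleModule R x.1 ∧ IsSimpleModule R y.1 ∧
        x.1 ⊓ y.1 = ⊥ ∧ x.1 ⊔ y.1 = ⊤ := by
  simp only [isSimpleModule_iff_isAtom, ← disjoint_iff, ← codisjoint_iff]
  constructor
  · intro h
    exact ⟨intersectionGraph.isAtom_of_not_reachable h,
      intersectionGraph.isAtom_of_not_reachable (mt .symm h),
      intersectionGraph.disjoint_of_not_reachable h,
      intersectionGraph.codisjoint_of_not_reachable_of_le h le_rfl x.2.1⟩
  · rintro ⟨hx, hy, hd, hc⟩ ⟨_ | ⟨hadj, _⟩⟩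
    · exact hxy rfl
    · exact intersectionGraph.not_adj_of_isCompl hx hy ⟨hd, hc⟩ _ hadj
end

section
/- Let V be a left R-module. If there is a path in the intersection graph G(V) between two distinct proper submodules X and Y, then the distance between X and Y is at most 2. -/
section Lattice

variable {α : Type*} [Lattice α] [BoundedOrder α] {x y w : α}

theorem Disjoint.exists_meets_both_of_sup_ne_top (hxy : Disjoint x y) (hx : x ≠ ⊥) (hy : y ≠ ⊥)
    (hsup : x ⊔ y ≠ ⊤) :
    ∃ u, u ≠ ⊤ ∧ u ≠ x ∧ u ≠ y ∧ x ⊓ u ≠ ⊥ ∧ u ⊓ y ≠ ⊥ := by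
  refine ⟨x ⊔ y, hsup, fun h ↦ hy ?_, fun h ↦ hx ?_, by rwa [inf_sup_self],
    by rwa [inf_eq_right.mpr le_sup_right]⟩
  · exact hxy.eq_bot_of_ge (h ▸ le_sup_right)
  · exact hxy.eq_bot_of_le (h ▸ le_sup_left)

theorem Disjoint.exists_meets_both_of_sup_eq_top [IsModularLattice α] (hxy : Disjoint x y)
    (hy : y ≠ ⊥) (hsup : x ⊔ y = ⊤) (hw : w ≠ ⊤) (hwx : w ≠ x) (hxw : x ⊓ w ≠ ⊥) :
    ∃ u, u ≠ ⊤ ∧ u ≠ x ∧ u ≠ y ∧ x ⊓ u ≠ ⊥ ∧ u ⊓ y ≠ ⊥ := by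
  by_cases hwy : w ⊓ y = ⊥
  swap
  · exact ⟨w, hw, hwx, fun h ↦ hxw (h ▸ hxy.eq_bot), hxw, hwy⟩
  -- if `x ≤ w`, then `w = (x ⊔ y) ⊓ w = x ⊔ (y ⊓ w) = x`
  have hxw_lt : x ⊓ w ≠ x := fun h ↦ hwx <| by
    have hxw_le : x ≤ w := h ▸ inf_le_right
    simpa [hsup, inf_comm y w, hwy] using sup_inf_assoc_of_le y hxw_le
  have hux : (x ⊓ w ⊔ y) ⊓ x = x ⊓ w := by
    rw [sup_inf_assoc_of_le y inf_le_left, inf_comm y x, hxy.eq_bot, sup_bot_eq]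
  refine ⟨x ⊓ w ⊔ y, fun h ↦ hxw_lt ?_, fun h ↦ hy ?_, fun h ↦ hxw ?_, ?_,
    by rwa [inf_eq_right.mpr le_sup_right]⟩
  · rwa [h, top_inf_eq, eq_comm] at hux
  · exact hxy.eq_bot_of_ge (h ▸ le_sup_right)
  · rw [← hux, h, inf_comm, hxy.eq_bot]
  · rwa [inf_comm, hux]

end Lattice

namespace intersectionGraph

variable {R V : Type*} [Ring R] [AddCommGroup V] [Module R V]

theorem exists_adj_adj_of_inf_eq_bot {x y w : ProperSubmodule R V} (hxy : x.1 ⊓ y.1 = ⊥)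
    (hxw : (intersectionGraph R V).Adj x w) :
    ∃ u, (intersectionGraph R V).Adj x u ∧ (intersectionGraph R V).Adj u y := by
  have hdisj : Disjoint x.1 y.1 := disjoint_iff.mpr hxy
  obtain ⟨u, hu_top, hux, huy, hxu, huy'⟩ : ∃ u, u ≠ ⊤ ∧ u ≠ x.1 ∧ u ≠ y.1 ∧ x.1 ⊓ u ≠ ⊥ ∧
      u ⊓ y.1 ≠ ⊥ := by
    by_cases hsup : x.1 ⊔ y.1 = ⊤
    · exact hdisj.exists_meets_both_of_sup_eq_top y.2.1 hsup w.2.2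
        (fun h ↦ hxw.1 (Subtype.ext h.symm)) hxw.2
    · exact hdisj.exists_meets_both_of_sup_ne_top x.2.1 y.2.1 hsup
  have hu_bot : u ≠ ⊥ := fun h ↦ hxu (by rw [h, inf_bot_eq])
  exact ⟨⟨u, hu_bot, hu_top⟩, ⟨fun h ↦ hux (congrArg Subtype.val h).symm, hxu⟩,
    ⟨fun h ↦ huy (congrArg Subtype.val h), huy'⟩⟩

end intersectionGraph

theorem stmt1 (R V : Type*) [Ring R] [AddCommGroup V] [Module R V]
    (x y : ProperSubmodule R V) (hxy : x ≠ y)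
    (h : (intersectionGraph R V).Reachable x y) :
    (intersectionGraph R V).dist x y ≤ 2 := by
  by_cases hinf : x.1 ⊓ y.1 = ⊥
  · obtain ⟨p⟩ := h
    have hxw := p.adj_snd (SimpleGraph.Walk.not_nil_of_ne hxy)
    obtain ⟨u, hxu, huy⟩ := intersectionGraph.exists_adj_adj_of_inf_eq_bot hinf hxw
    exact SimpleGraph.dist_le (.cons hxu (.cons huy .nil))
  · have hadj : (intersectionGraph R V).Adj x y := ⟨hxy, hinf⟩
    rw [SimpleGraph.dist_eq_one_iff_adj.mpr hadj]
    omega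
end

section
/- If the intersection graph G(V) has at least one edge, then G(V) is connected. -/
/- Proof idea: if `x ⊓ y ≠ 0` for distinct proper `x, y`, every vertex `A` reaches `z := x ⊓ y`.
If `A + z` is proper, go through `A + z`. Otherwise `A + z = V`; one of `x, y`, say `w`, strictly
contains `z`, and modularity gives `w = z + (A ∩ w)`, so `A ∩ w ≠ 0` and `A — w — z`. -/

theorem inf_ne_bot_of_sup_eq_top_of_lt {α : Type*} [Lattice α] [BoundedOrder α]
    [IsModularLattice α] {a z w : α} (hzw : z < w) (h : a ⊔ z = ⊤) : a ⊓ w ≠ ⊥ := by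
  intro hbot
  apply hzw.ne'
  calc w = (z ⊔ a) ⊓ w := by rw [sup_comm, h, top_inf_eq]
    _ = z ⊔ a ⊓ w := sup_inf_assoc_of_le a hzw.le
    _ = z := by rw [hbot, sup_bot_eq]

namespace intersectionGraph

variable {R V : Type*} [Ring R] [AddCommGroup V] [Module R V]

theorem reachable_of_inf_ne_bot {U W : ProperSubmodule R V} (h : U.1 ⊓ W.1 ≠ ⊥) :
    (intersectionGraph R V).Reachable U W := by
  by_cases hUW : U = W
  · exact hUW ▸ SimpleGraph.Reachable.refl U
  · exact SimpleGraph.Adj.reachable ⟨hUW, h⟩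

theorem reachable_of_le {U W : ProperSubmodule R V} (h : U.1 ≤ W.1) :
    (intersectionGraph R V).Reachable U W :=
  reachable_of_inf_ne_bot (by rw [inf_eq_left.mpr h]; exact U.2.1)

theorem reachable_of_le_of_le_of_ne {z : ProperSubmodule R V} (x y : ProperSubmodule R V)
    (hx : z.1 ≤ x.1) (hy : z.1 ≤ y.1) (hxy : x ≠ y) (A : ProperSubmodule R V) :
    (intersectionGraph R V).Reachable A z := by
  by_cases hAz : A.1 ⊔ z.1 = ⊤
  · obtain ⟨w, hzw, hwz⟩ : ∃ w : ProperSubmodule R V, z.1 ≤ w.1 ∧ w ≠ z := by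
      by_cases hxz : x = z
      · exact ⟨y, hy, fun hyz => hxy (hxz.trans hyz.symm)⟩
      · exact ⟨x, hx, hxz⟩
    have hlt : z.1 < w.1 := lt_of_le_of_ne hzw fun h => hwz (Subtype.ext h.symm)
    exact (reachable_of_inf_ne_bot (inf_ne_bot_of_sup_eq_top_of_lt hlt hAz)).trans
      (reachable_of_le hzw).symm
  · let S : ProperSubmodule R V :=
      ⟨A.1 ⊔ z.1, fun h => A.2.1 (eq_bot_mono le_sup_left h), hAz⟩
    exact (reachable_of_le (W := S) le_sup_left).trans (reachable_of_le le_sup_right).symm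

end intersectionGraph

theorem stmt3 (R V : Type*) [Ring R] [AddCommGroup V] [Module R V]
    (h : ∃ x y : ProperSubmodule R V, (intersectionGraph R V).Adj x y) :
    (intersectionGraph R V).Connected := by
  obtain ⟨x, y, hxy, hinf⟩ := h
  let z : ProperSubmodule R V :=
    ⟨x.1 ⊓ y.1, hinf, fun h => x.2.2 (eq_top_mono inf_le_left h)⟩
  have hreach :=
    intersectionGraph.reachable_of_le_of_le_of_ne (z := z) x y inf_le_left inf_le_right hxy
  have : Nonempty (ProperSubmodule R V) := ⟨x⟩
  exact ⟨fun A B => (hreach A).trans (hreach B).symm⟩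
end

section
/- The intersection graph G(V) has no edges if and only if V has a composition series of length at most 2. -/
/-- `V` has a composition series (from `⊥` to `⊤`) of length `n`. -/
def HasCompositionSeriesOfLength (R V : Type*) [Ring R] [AddCommGroup V] [Module R V]
    (n : ℕ) : Prop :=
  ∃ s : RelSeries {p : Submodule R V × Submodule R V | p.1 ⋖ p.2},
    s.head = ⊥ ∧ s.last = ⊤ ∧ s.length = n

namespace RelSeries

variable {α : Type*} {r : SetRel α α} {a b : α}

theorem exists_head_last_length_zero_iff :
    (∃ s : RelSeries r, s.head = a ∧ s.last = b ∧ s.length = 0) ↔ a = b := by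
  constructor
  · rintro ⟨s, rfl, rfl, hs⟩
    exact congrArg s (Fin.ext (by simp [hs]))
  · rintro rfl
    exact ⟨singleton r a, rfl, rfl, rfl⟩

theorem exists_head_last_length_succ_iff {n : ℕ} :
    (∃ s : RelSeries r, s.head = a ∧ s.last = b ∧ s.length = n + 1) ↔
      ∃ c, (∃ s : RelSeries r, s.head = a ∧ s.last = c ∧ s.length = n) ∧ (c, b) ∈ r := by
  constructor
  · rintro ⟨s, rfl, rfl, hs⟩
    exact ⟨s.eraseLast.last, ⟨s.eraseLast, rfl, rfl, by simp [hs]⟩,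
      s.eraseLast_last_rel_last (by omega)⟩
  · rintro ⟨c, ⟨s, rfl, rfl, rfl⟩, hc⟩
    exact ⟨s.snoc b hc, by simp, by simp, by simp⟩

end RelSeries

section BoundedOrder

variable {α : Type*}

theorem exists_covBy_chain_of_forall_isAtom [PartialOrder α] [BoundedOrder α]
    (h : ∀ a : α, a ≠ ⊥ → a ≠ ⊤ → IsAtom a) :
    (⊥ : α) = ⊤ ∨ (⊥ : α) ⋖ ⊤ ∨ ∃ m : α, ⊥ ⋖ m ∧ m ⋖ ⊤ := by
  by_cases hex : ∃ m : α, m ≠ ⊥ ∧ m ≠ ⊤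
  · obtain ⟨m, hm, hm'⟩ := hex
    have hatom := h m hm hm'
    have hcoatom : IsCoatom m := by
      refine ⟨hm', fun b hmb => by_contra fun hb => hm ?_⟩
      exact (h b (hatom.bot_lt.trans hmb).ne' hb).2 m hmb
    exact .inr (.inr ⟨m, bot_covBy_iff.2 hatom, covBy_top_iff.2 hcoatom⟩)
  · push Not at hex
    by_cases hbt : (⊥ : α) = ⊤
    · exact .inl hbt
    · exact .inr (.inl ⟨bot_lt_iff_ne_bot.2 (Ne.symm hbt),
        fun c hc hc' => hc'.ne (hex c hc.ne')⟩)

variable [Lattice α] [BoundedOrder α] [IsModularLattice α]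

theorem IsAtom.isAtom_of_isCoatom {m a : α} (hm : IsAtom m) (hm' : IsCoatom m)
    (ha : a ≠ ⊥) (ha' : a ≠ ⊤) : IsAtom a := by
  by_cases ham : a = m
  · exact ham ▸ hm
  have hinf : a ⊓ m = ⊥ := (hm.le_iff.1 inf_le_right).resolve_right fun h =>
    ham ((hm'.le_iff.1 (inf_eq_right.1 h)).resolve_left ha')
  have hsup : a ⊔ m = ⊤ := (hm'.le_iff.1 le_sup_right).resolve_right fun h =>
    ham ((hm.le_iff.1 (sup_eq_right.1 h)).resolve_left ha)
  exact (IsCompl.of_eq hinf hsup).isAtom_iff_isCoatom.2 hm'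

theorem forall_isAtom_of_covBy_chain
    (h : (⊥ : α) = ⊤ ∨ (⊥ : α) ⋖ ⊤ ∨ ∃ m : α, ⊥ ⋖ m ∧ m ⋖ ⊤) :
    ∀ a : α, a ≠ ⊥ → a ≠ ⊤ → IsAtom a := by
  intro a ha ha'
  rcases h with hbt | hcov | ⟨m, hm, hm'⟩
  · exact (ha (le_bot_iff.1 (hbt ▸ le_top))).elim
  · exact (hcov.2 (bot_lt_iff_ne_bot.2 ha) (lt_top_iff_ne_top.2 ha')).elim
  · exact (bot_covBy_iff.1 hm).isAtom_of_isCoatom (covBy_top_iff.1 hm') ha ha'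

end BoundedOrder

section Submodule

variable {R V : Type*} [Ring R] [AddCommGroup V] [Module R V]

theorem forall_not_intersectionGraph_adj_iff :
    (∀ x y : ProperSubmodule R V, ¬ (intersectionGraph R V).Adj x y) ↔
      ∀ U : Submodule R V, U ≠ ⊥ → U ≠ ⊤ → IsAtom U := by
  constructor
  · intro h U hU hU'
    refine ⟨hU, fun W hWU => by_contra fun hW => h ⟨W, hW, (hWU.trans_le le_top).ne⟩ ⟨U, hU, hU'⟩
      ⟨fun e => hWU.ne (congrArg Subtype.val e), ?_⟩⟩
    rwa [inf_eq_left.2 hWU.le]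
  · rintro h x y ⟨hne, hinf⟩
    exact hinf ((h _ x.2.1 x.2.2).disjoint_of_ne (h _ y.2.1 y.2.2)
      (Subtype.val_injective.ne hne)).eq_bot

theorem exists_hasCompositionSeriesOfLength_le_two_iff :
    (∃ n ≤ 2, HasCompositionSeriesOfLength R V n) ↔
      (⊥ : Submodule R V) = ⊤ ∨ (⊥ : Submodule R V) ⋖ ⊤ ∨
        ∃ M : Submodule R V, ⊥ ⋖ M ∧ M ⋖ ⊤ := by
  have hn : ∀ n : ℕ, n ≤ 2 ↔ n = 0 ∨ n = 0 + 1 ∨ n = 0 + 1 + 1 := by omega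
  simp only [hn, or_and_right, exists_or, exists_eq_left, HasCompositionSeriesOfLength,
    RelSeries.exists_head_last_length_succ_iff, RelSeries.exists_head_last_length_zero_iff]
  simp

end Submodule

theorem stmt4 (R V : Type*) [Ring R] [AddCommGroup V] [Module R V] :
    (∀ x y : ProperSubmodule R V, ¬ (intersectionGraph R V).Adj x y) ↔
      ∃ n ≤ 2, HasCompositionSeriesOfLength R V n := by
  rw [forall_not_intersectionGraph_adj_iff, exists_hasCompositionSeriesOfLength_le_two_iff]
  exact ⟨exists_covBy_chain_of_forall_isAtom, forall_isAtom_of_covBy_chain⟩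
end

section
/- G(V) has a cut vertex if and only if the socle of V is a direct sum of two simple R-modules and the socle is a maximal R-submodule of V. Moreover, in this case the socle of V is the unique cut vertex of G(V). -/
/-- A cut vertex: a vertex `v` such that some two vertices distinct from `v` are
connected in `G` but not after deleting `v` (so deleting `v` increases the
number of connected components). -/
def SimpleGraph.IsCutVertex {α : Type*} (G : SimpleGraph α) (v : α) : Prop :=
  ∃ (a b : α) (ha : a ≠ v) (hb : b ≠ v), G.Reachable a b ∧
    ¬ (G.induce {u | u ≠ v}).Reachable ⟨a, ha⟩ ⟨b, hb⟩

/-- The socle of a module: the sum of all its simple submodules. -/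
def moduleSocle (R V : Type*) [Ring R] [AddCommGroup V] [Module R V] : Submodule R V :=
  sSup {W : Submodule R V | IsSimpleModule R W}

/-!
Work in the modular lattice of submodules. If `v` is a cut vertex, take neighbours `x`, `y` of
`v` lying in different components once `v` is removed. Then `c = x ⊓ v` and `d = y ⊓ v` are
nonzero, strictly below `v`, and no submodule other than `v` and `⊤` meets both; modularity
forces `c ⊕ d = v` with `c`, `d` simple and `v` maximal. A simple `U ⊄ v` would link `c` to `d`
through `c ⊔ U` and `d ⊔ U`, so `v` contains every simple submodule and is the socle.
Conversely, if the socle `s = S ⊕ T` is maximal, then every vertex `w ≠ s` meets `s` in a simple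
submodule, so `w ↦ w ⊓ s` is constant along edges avoiding `s`, and it separates `S` from `T`.
-/

namespace SimpleGraph

lemma Reachable.eq_of_forall_adj {α β : Type*} {G : SimpleGraph α} {f : α → β}
    (hf : ∀ x y, G.Adj x y → f x = f y) {x y : α} (h : G.Reachable x y) : f x = f y := by
  obtain ⟨w⟩ := h
  induction w with
  | nil => rfl
  | cons hadj _ ih => exact (hf _ _ hadj).trans ih

variable {α : Type*} {G : SimpleGraph α}

lemma isCutVertex_of_forall_adj {β : Type*} {v a b : α} (ha : a ≠ v) (hb : b ≠ v)
    (hab : G.Reachable a b) (f : α → β)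
    (hf : ∀ x y, x ≠ v → y ≠ v → G.Adj x y → f x = f y) (hfab : f a ≠ f b) :
    G.IsCutVertex v :=
  ⟨a, b, ha, hb, hab, fun h =>
    hfab (h.eq_of_forall_adj (f := fun u : {u // u ≠ v} => f u) fun x y hxy =>
      hf x y x.2 y.2 hxy)⟩

lemma IsCutVertex.exists_neighbors_separated {v : α} (hv : G.IsCutVertex v) :
    ∃ s : Set α, (∀ ⦃a b⦄, a ∈ s → G.Adj a b → b ≠ v → b ∈ s) ∧
      (∃ x ∈ s, G.Adj x v) ∧ ∃ y ∉ s, y ≠ v ∧ G.Adj y v := by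
  obtain ⟨a, b, ha, hb, ⟨w⟩, hab⟩ := hv
  let H := G.induce {u | u ≠ v}
  let s : Set α := {u | ∃ hu : u ≠ v, H.Reachable ⟨a, ha⟩ ⟨u, hu⟩}
  have hs : ∀ ⦃x y⦄, x ∈ s → G.Adj x y → y ≠ v → y ∈ s := by
    rintro x y ⟨hx, hax⟩ hxy hy
    exact ⟨hy, hax.trans (induce_adj.mpr hxy : H.Adj ⟨x, hx⟩ ⟨y, hy⟩).reachable⟩
  have has : a ∈ s := ⟨ha, .refl _⟩
  have hbs : b ∉ s := fun ⟨_, h⟩ => hab h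
  obtain ⟨dx, -, hdx, hdx'⟩ := w.exists_boundary_dart s has hbs
  have hxv : dx.snd = v := by_contra fun h => hdx' (hs hdx dx.adj h)
  obtain ⟨dy, -, ⟨hdyv, hdy⟩, hdy'⟩ :=
    w.reverse.exists_boundary_dart {u | u ≠ v ∧ u ∉ s} ⟨hb, hbs⟩ fun h => h.2 has
  have hyv : dy.snd = v := by_contra fun h => hdy' ⟨h, fun hs' => hdy (hs hs' dy.adj.symm hdyv)⟩
  exact ⟨s, hs, ⟨dx.fst, hdx, hxv ▸ dx.adj⟩, dy.fst, hdy, hdyv, hyv ▸ dy.adj⟩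

end SimpleGraph

section BoundedLattice

variable {α : Type*} [Lattice α] [BoundedOrder α]

/-- In the intersection graph of `α` (elements other than `⊥`, `⊤`, adjacent when their meet is
not `⊥`) with `v` removed, `A` is a union of connected components. -/
def IsMeetClosedAway (v : α) (A : Set α) : Prop :=
  ∀ ⦃a b⦄, a ∈ A → b ≠ ⊤ → b ≠ v → a ⊓ b ≠ ⊥ → b ∈ A

structure IsSeparation (v : α) (A : Set α) (c d : α) : Prop where
  closed : IsMeetClosedAway v A
  left_mem : c ∈ A
  right_not_mem : d ∉ A
  left_ne_bot : c ≠ ⊥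
  right_ne_bot : d ≠ ⊥
  left_lt : c < v
  right_lt : d < v
  ne_top : v ≠ ⊤

lemma IsMeetClosedAway.isSeparation {v x y : α} {A : Set α} (hA : IsMeetClosedAway v A)
    (hx : x ∈ A) (hy : y ∉ A) (hyt : y ≠ ⊤) (hyv : y ≠ v) (hv : v ≠ ⊤)
    (hxv : x ⊓ v ≠ ⊥) (hvy : y ⊓ v ≠ ⊥) : IsSeparation v A (x ⊓ v) (y ⊓ v) := by
  have hxy : x ⊓ y = ⊥ := by_contra fun h => hy (hA hx hyt hyv h)
  have hc : x ⊓ v < v := inf_lt_right.mpr fun h =>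
    hvy (le_bot_iff.mp (hxy ▸ le_inf (inf_le_right.trans h) inf_le_left))
  have hd : y ⊓ v < v := inf_lt_right.mpr fun h =>
    hxv (le_bot_iff.mp (hxy ▸ le_inf inf_le_left (inf_le_right.trans h)))
  refine ⟨hA, hA hx hc.ne_top hc.ne (by rwa [inf_of_le_right inf_le_left]),
    fun hmem => hy (hA hmem hyt hyv (by rwa [inf_of_le_left inf_le_left])), hxv, hvy, hc, hd, hv⟩

lemma isAtom_of_forall_inf_eq_bot_or [IsModularLattice α] {v c d : α} (hc : c ≠ ⊥)
    (hd : d ≠ ⊥) (hcd : c ⊓ d = ⊥) (hsup : c ⊔ d = v)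
    (H : ∀ m, m ≠ ⊤ → m ≠ v → m ⊓ c = ⊥ ∨ m ⊓ d = ⊥) : IsAtom c := by
  refine ⟨hc, fun c' hc' => by_contra fun hc'0 => ?_⟩
  rcases (hsup ▸ sup_le_sup_right hc'.le d : c' ⊔ d ≤ v).lt_or_eq with hlt | heq
  · rcases H _ hlt.ne_top hlt.ne with hm | hm
    · exact hc'0 (le_bot_iff.mp (hm ▸ le_inf le_sup_left hc'.le))
    · exact hd (by rwa [inf_of_le_right le_sup_right] at hm)
  · refine hc'.ne ?_
    calc c' = c' ⊔ d ⊓ c := by rw [inf_comm, hcd, sup_bot_eq]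
      _ = (c' ⊔ d) ⊓ c := (sup_inf_assoc_of_le d hc'.le).symm
      _ = c := by rw [heq, ← hsup, inf_of_le_right le_sup_left]

namespace IsSeparation

variable {v c d : α} {A : Set α}

lemma inf_eq_bot_or_inf_eq_bot (h : IsSeparation v A c d) {m : α} (hm : m ≠ ⊤)
    (hmv : m ≠ v) : m ⊓ c = ⊥ ∨ m ⊓ d = ⊥ := by
  by_contra! ⟨hmc, hmd⟩
  have hmA : m ∈ A := h.closed h.left_mem hm hmv (by rwa [inf_comm])
  exact h.right_not_mem (h.closed hmA h.right_lt.ne_top h.right_lt.ne hmd)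

lemma eq_of_le (h : IsSeparation v A c d) {m : α} (hm : m ≠ ⊤) (hcm : c ≤ m)
    (hdm : d ≤ m) : m = v := by
  by_contra hmv
  rcases h.inf_eq_bot_or_inf_eq_bot hm hmv with hmc | hmd
  · exact h.left_ne_bot (by rwa [inf_of_le_right hcm] at hmc)
  · exact h.right_ne_bot (by rwa [inf_of_le_right hdm] at hmd)

lemma inf_eq_bot (h : IsSeparation v A c d) : c ⊓ d = ⊥ :=
  (h.inf_eq_bot_or_inf_eq_bot h.left_lt.ne_top h.left_lt.ne).resolve_left
    (by rw [inf_idem]; exact h.left_ne_bot)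

lemma sup_eq (h : IsSeparation v A c d) : c ⊔ d = v :=
  h.eq_of_le (ne_top_of_le_ne_top h.ne_top (sup_le h.left_lt.le h.right_lt.le))
    le_sup_left le_sup_right

lemma isCoatom (h : IsSeparation v A c d) : IsCoatom v :=
  ⟨h.ne_top, fun _ hw => by_contra fun hwt =>
    hw.ne' (h.eq_of_le hwt (h.left_lt.le.trans hw.le) (h.right_lt.le.trans hw.le))⟩

variable [IsModularLattice α]

lemma isAtom_left (h : IsSeparation v A c d) : IsAtom c :=
  isAtom_of_forall_inf_eq_bot_or h.left_ne_bot h.right_ne_bot h.inf_eq_bot h.sup_eq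
    fun _ hm hmv => h.inf_eq_bot_or_inf_eq_bot hm hmv

lemma isAtom_right (h : IsSeparation v A c d) : IsAtom d :=
  isAtom_of_forall_inf_eq_bot_or h.right_ne_bot h.left_ne_bot (inf_comm c d ▸ h.inf_eq_bot)
    (sup_comm c d ▸ h.sup_eq) fun _ hm hmv => (h.inf_eq_bot_or_inf_eq_bot hm hmv).symm

lemma le_of_isAtom (h : IsSeparation v A c d) {U : α} (hU : IsAtom U) : U ≤ v := by
  by_contra hUv
  have hUv0 : U ⊓ v = ⊥ := (hU.not_le_iff_disjoint.mp hUv).eq_bot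
  have hjoin : ∀ e < v, e ⊔ U ≠ ⊤ ∧ e ⊔ U ≠ v := by
    intro e he
    have hproj : (e ⊔ U) ⊓ v = e := by rw [sup_inf_assoc_of_le U he.le, hUv0, sup_bot_eq]
    exact ⟨fun ht => he.ne (by rw [← hproj, ht, top_inf_eq]),
      fun hv => he.ne (by rw [← hproj, hv, inf_idem])⟩
  -- `c ⊔ U` and `d ⊔ U` would connect `c` to `d` away from `v`
  have hcU : c ⊔ U ∈ A := h.closed h.left_mem (hjoin c h.left_lt).1 (hjoin c h.left_lt).2
    (by rw [inf_of_le_left le_sup_left]; exact h.left_ne_bot)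
  have hdU : d ⊔ U ∈ A := h.closed hcU (hjoin d h.right_lt).1 (hjoin d h.right_lt).2
    (ne_bot_of_le_ne_bot hU.1 (le_inf le_sup_right le_sup_right))
  exact h.right_not_mem (h.closed hdU h.right_lt.ne_top h.right_lt.ne
    (by rw [inf_of_le_right le_sup_left]; exact h.right_ne_bot))

lemma isLUB_setOf_isAtom (h : IsSeparation v A c d) : IsLUB {U | IsAtom U} v :=
  ⟨fun _ hU => h.le_of_isAtom hU,
    fun _ hw => h.sup_eq ▸ sup_le (hw h.isAtom_left) (hw h.isAtom_right)⟩

end IsSeparation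

end BoundedLattice

lemma inf_eq_inf_of_inf_ne_bot {α : Type*} [Lattice α] [OrderBot α] {s p q : α}
    (H : ∀ w, w ≠ ⊥ → ¬ s ≤ w → IsAtom (w ⊓ s))
    (hp : ¬ s ≤ p) (hq : ¬ s ≤ q) (hpq : p ⊓ q ≠ ⊥) : p ⊓ s = q ⊓ s := by
  have hm : IsAtom (p ⊓ q ⊓ s) := H _ hpq fun h => hp (h.trans inf_le_left)
  have hmp := ((H p (ne_bot_of_le_ne_bot hpq inf_le_left) hp).le_iff_eq hm.1).mp
    (inf_le_inf_right s inf_le_left)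
  have hmq := ((H q (ne_bot_of_le_ne_bot hpq inf_le_right) hq).le_iff_eq hm.1).mp
    (inf_le_inf_right s inf_le_right)
  exact hmp.symm.trans hmq

lemma isAtom_of_lt_sup {α : Type*} [Lattice α] [OrderBot α] [IsModularLattice α]
    {S T u : α} (hS : IsAtom S) (hT : IsAtom T) (hST : S ⊓ T = ⊥) (hu : u ≠ ⊥)
    (hlt : u < S ⊔ T) : IsAtom u := by
  have hcov : S ⋖ S ⊔ T := covBy_sup_of_inf_covBy_right (hST ▸ bot_covBy_iff.mpr hT)
  by_cases hSu : S ≤ u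
  · exact (hcov.eq_or_eq hSu hlt.le).resolve_right hlt.ne ▸ hS
  · have hSu0 : S ⊓ u = ⊥ := (hS.not_le_iff_disjoint.mp hSu).eq_bot
    have hsup : S ⊔ u = S ⊔ T :=
      (hcov.eq_or_eq le_sup_left (sup_le le_sup_left hlt.le)).resolve_left fun h =>
        hu ((inf_of_le_right (sup_eq_left.mp h)).symm.trans hSu0)
    rw [← hsup] at hcov
    exact bot_covBy_iff.mp (hSu0 ▸ inf_covBy_of_covBy_sup_left hcov)

lemma isAtom_inf_of_isCoatom {α : Type*} [Lattice α] [BoundedOrder α] [IsModularLattice α]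
    {s w : α} (hs : IsCoatom s) (hatoms : ∀ U, IsAtom U → U ≤ s)
    (hbelow : ∀ u, u ≠ ⊥ → u < s → IsAtom u) (hw : w ≠ ⊥) (hsw : ¬ s ≤ w) :
    IsAtom (w ⊓ s) := by
  refine hbelow _ (fun h => ?_) (inf_lt_right.mpr hsw)
  have hws : ¬ w ≤ s := fun hle => hw (by rwa [inf_of_le_left hle] at h)
  -- `w ⊓ s = ⊥` would make `w` a complement of the coatom `s`, hence an atom not below `s`
  have hcompl : IsCompl s w :=
    ⟨disjoint_iff.mpr (by rwa [inf_comm]), codisjoint_iff.mpr (hs.2 _ (left_lt_sup.mpr hws))⟩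
  exact hws (hatoms w (hcompl.isCoatom_iff_isAtom.mp hs))

section Module

variable {R V : Type*} [Ring R] [AddCommGroup V] [Module R V]

lemma moduleSocle_eq_sSup_isAtom : moduleSocle R V = sSup {W : Submodule R V | IsAtom W} := by
  simp only [moduleSocle, isSimpleModule_iff_isAtom]

lemma IsAtom.le_moduleSocle {U : Submodule R V} (hU : IsAtom U) : U ≤ moduleSocle R V :=
  le_sSup (isSimpleModule_iff_isAtom.mpr hU)

lemma IsSeparation.eq_moduleSocle {W c d : Submodule R V} {A : Set (Submodule R V)}
    (h : IsSeparation W A c d) : W = moduleSocle R V := by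
  rw [moduleSocle_eq_sSup_isAtom, h.isLUB_setOf_isAtom.sSup_eq]

lemma exists_isSeparation_of_isCutVertex {v : ProperSubmodule R V}
    (hv : (intersectionGraph R V).IsCutVertex v) : ∃ A c d, IsSeparation v.1 A c d := by
  obtain ⟨s, hs, ⟨x, hx, hxv⟩, y, hy, hyv, hyv'⟩ := hv.exists_neighbors_separated
  refine ⟨Subtype.val '' s, _, _, IsMeetClosedAway.isSeparation ?_ ⟨x, hx, rfl⟩ ?_ y.2.2
    (fun h => hyv (Subtype.ext h)) v.2.2 hxv.2 hyv'.2⟩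
  · rintro _ b ⟨a, ha, rfl⟩ hbt hbv hab
    have hb : b ≠ ⊥ := fun h => hab (by rw [h, inf_bot_eq])
    by_cases hba : (⟨b, hb, hbt⟩ : ProperSubmodule R V) = a
    · exact ⟨a, ha, congrArg Subtype.val hba.symm⟩
    · exact ⟨_, hs ha ⟨Ne.symm hba, hab⟩ fun h => hbv (congrArg Subtype.val h), rfl⟩
  · rintro ⟨y', hy', hyy⟩
    exact hy (Subtype.ext hyy ▸ hy')

lemma isCutVertex_of_eq_sup {v : ProperSubmodule R V} {S T : Submodule R V} (hS : IsAtom S)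
    (hT : IsAtom T) (hST : S ⊓ T = ⊥) (hv : v.1 = S ⊔ T) (hco : IsCoatom v.1)
    (hatoms : ∀ U : Submodule R V, IsAtom U → U ≤ v.1) :
    (intersectionGraph R V).IsCutVertex v := by
  have hnotle : ∀ w : ProperSubmodule R V, w ≠ v → ¬ v.1 ≤ w.1 := fun w hw hle =>
    hle.lt_or_eq.elim (fun hlt => w.2.2 (hco.2 _ hlt)) fun heq => hw (Subtype.ext heq.symm)
  have H : ∀ w, w ≠ ⊥ → ¬ v.1 ≤ w → IsAtom (w ⊓ v.1) :=
    fun w => isAtom_inf_of_isCoatom hco hatoms fun u hu hlt =>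
      isAtom_of_lt_sup hS hT hST hu (hv ▸ hlt)
  have hSv : S < v.1 :=
    hv ▸ left_lt_sup.mpr fun h => hT.1 (le_bot_iff.mp (hST ▸ le_inf h le_rfl))
  have hTv : T < v.1 :=
    hv ▸ right_lt_sup.mpr fun h => hS.1 (le_bot_iff.mp (hST ▸ le_inf le_rfl h))
  let a : ProperSubmodule R V := ⟨S, hS.1, hSv.ne_top⟩
  let b : ProperSubmodule R V := ⟨T, hT.1, hTv.ne_top⟩
  have ha : a ≠ v := fun h => hSv.ne (congrArg Subtype.val h)
  have hb : b ≠ v := fun h => hTv.ne (congrArg Subtype.val h)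
  have hav : (intersectionGraph R V).Adj a v :=
    ⟨ha, by rw [inf_of_le_left hSv.le]; exact hS.1⟩
  have hvb : (intersectionGraph R V).Adj v b :=
    ⟨hb.symm, by rw [inf_of_le_right hTv.le]; exact hT.1⟩
  refine SimpleGraph.isCutVertex_of_forall_adj ha hb (hav.reachable.trans hvb.reachable)
    (fun u => u.1 ⊓ v.1)
    (fun x y hx hy hxy => inf_eq_inf_of_inf_ne_bot H (hnotle x hx) (hnotle y hy) hxy.2) ?_
  show S ⊓ v.1 ≠ T ⊓ v.1
  rw [inf_of_le_left hSv.le, inf_of_le_left hTv.le]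
  exact fun h => hS.1 (by rw [← hST, h, inf_idem])

end Module

theorem stmt5 (R V : Type*) [Ring R] [AddCommGroup V] [Module R V] :
    ((∃ v : ProperSubmodule R V, (intersectionGraph R V).IsCutVertex v) ↔
      ((∃ S T : Submodule R V, IsSimpleModule R S ∧ IsSimpleModule R T ∧
          S ⊓ T = ⊥ ∧ S ⊔ T = moduleSocle R V) ∧ IsCoatom (moduleSocle R V))) ∧
    (∀ v : ProperSubmodule R V, (intersectionGraph R V).IsCutVertex v →
        v.1 = moduleSocle R V) := by
  refine ⟨⟨fun ⟨v, hv⟩ => ?_, fun ⟨⟨S, T, hS, hT, hST, hsup⟩, hco⟩ => ?_⟩,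
    fun v hv => ?_⟩
  · obtain ⟨A, c, d, h⟩ := exists_isSeparation_of_isCutVertex hv
    rw [← h.eq_moduleSocle]
    exact ⟨⟨c, d, isSimpleModule_iff_isAtom.mpr h.isAtom_left,
      isSimpleModule_iff_isAtom.mpr h.isAtom_right, h.inf_eq_bot, h.sup_eq⟩, h.isCoatom⟩
  · rw [isSimpleModule_iff_isAtom] at hS hT
    refine ⟨⟨moduleSocle R V, ne_bot_of_le_ne_bot hS.1 (hsup ▸ le_sup_left), hco.1⟩,
      isCutVertex_of_eq_sup hS hT hST hsup.symm hco fun _ hU => hU.le_moduleSocle⟩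
  · obtain ⟨A, c, d, h⟩ := exists_isSeparation_of_isCutVertex hv
    exact h.eq_moduleSocle
end

section
/- For a natural number m ≥ 3, if the intersection graph G(V) contains no m-cycle, then V has a composition series of length at most m. -/
open SimpleGraph

theorem SimpleGraph.exists_isCycle_of_completeGraph_isContained {α : Type*} {G : SimpleGraph α}
    {n : ℕ} (hn : 3 ≤ n) (h : completeGraph (Fin n) ⊑ G) :
    ∃ (v : α) (c : G.Walk v v), c.IsCycle ∧ c.length = n :=
  (cycleGraph_isContained_iff hn).1 ((IsContained.of_le le_top).trans h)

theorem exists_hasCompositionSeriesOfLength_le {R M : Type*} [Ring R] [AddCommGroup M]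
    [Module R M] (n : ℕ) (h : ∀ s : LTSeries (Submodule R M), s.length ≤ n) :
    ∃ k ≤ n, HasCompositionSeriesOfLength R M k := by
  have hlength : Module.length R M ≤ n := by
    rw [Module.length_eq_height]
    exact Order.height_le fun s _ ↦ by exact_mod_cast h s
  obtain ⟨s, hs_head, hs_last⟩ := isFiniteLength_iff_exists_compositionSeries.mp <|
    Module.length_ne_top_iff.mp (ne_top_of_le_ne_top (ENat.natCast_ne_top n) hlength)
  exact ⟨s.length, h (s.map ⟨id, fun h ↦ h.1⟩), s, hs_head, hs_last, rfl⟩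

section IntersectionGraph

variable {R V : Type*} [Ring R] [AddCommGroup V] [Module R V]

theorem intersectionGraph_adj_of_lt {U W : ProperSubmodule R V} (h : U.1 < W.1) :
    (intersectionGraph R V).Adj U W :=
  ⟨fun e ↦ h.ne (congrArg Subtype.val e), by rw [inf_eq_left.2 h.le]; exact U.2.1⟩

theorem completeGraph_isContained_intersectionGraph_of_strictMono {n : ℕ}
    (f : Fin n → ProperSubmodule R V) (hf : StrictMono fun i ↦ (f i).1) :
    completeGraph (Fin n) ⊑ intersectionGraph R V := by
  refine isContained_iff_exists_le_comap.2 ⟨⟨f, hf.injective.of_comp⟩, fun i j hij ↦ ?_⟩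
  rcases hij.lt_or_gt with hlt | hlt
  · exact intersectionGraph_adj_of_lt (hf hlt)
  · exact (intersectionGraph_adj_of_lt (hf hlt)).symm

theorem completeGraph_isContained_intersectionGraph_of_lt_length
    (s : LTSeries (Submodule R V)) {n : ℕ} (hn : n < s.length) :
    completeGraph (Fin n) ⊑ intersectionGraph R V := by
  let idx : Fin n → Fin (s.length + 1) := fun i ↦ ⟨i + 1, by omega⟩
  have hidx : StrictMono idx := fun _ _ hij ↦ Nat.succ_lt_succ hij
  have hbot (i : Fin n) : s (idx i) ≠ ⊥ := ne_bot_of_gt (s.strictMono (a := 0) i.val.succ_pos)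
  have htop (i : Fin n) : s (idx i) ≠ ⊤ :=
    ne_top_of_lt (s.strictMono (b := Fin.last _) (show i.val + 1 < s.length by omega))
  exact completeGraph_isContained_intersectionGraph_of_strictMono
    (fun i ↦ ⟨s (idx i), hbot i, htop i⟩) (s.strictMono.comp hidx)

end IntersectionGraph

theorem stmt7 (R V : Type*) [Ring R] [AddCommGroup V] [Module R V]
    (m : ℕ) (hm : 3 ≤ m)
    (h : ∀ (v : ProperSubmodule R V) (c : (intersectionGraph R V).Walk v v),
        ¬ (c.IsCycle ∧ c.length = m)) :
    ∃ n ≤ m, HasCompositionSeriesOfLength R V n := by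
  refine exists_hasCompositionSeriesOfLength_le m fun s ↦ ?_
  by_contra! hs
  obtain ⟨v, c, hc⟩ := exists_isCycle_of_completeGraph_isContained hm
    (completeGraph_isContained_intersectionGraph_of_lt_length s hs)
  exact h v c hc
end

section
/- Let U be a nonzero R-submodule of V which is not simple, and let W be a maximal element (with respect to inclusion) of the set of submodules X of V with X ∩ U = 0. If A is a dominating set for G(U), then {T + W : T ∈ A} is a dominating set for G(V). -/
/-- A dominating set for the intersection graph: every vertex outside `D` is
adjacent to some vertex of `D`. -/
def IsDominatingSet (R V : Type*) [Ring R] [AddCommGroup V] [Module R V]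
    (D : Set (ProperSubmodule R V)) : Prop :=
  ∀ v ∉ D, ∃ w ∈ D, (intersectionGraph R V).Adj v w

/-!
If `X` is a nonzero submodule of `V`, either `X ∩ W ≠ 0`, and then `X` meets every `T + W`, or
`X ∩ W = 0`, and then maximality of `W` forces `(X + W) ∩ U ≠ 0`, so that some `T ∈ A` meets
`X + W`. Since `T ⊆ U` meets `W` trivially, modularity turns `T ∩ (X + W) ≠ 0` into `X ∩ (T + W) ≠ 0`.
Properness of `T + W` is also modularity: `(T + W) ∩ U = T + (W ∩ U) = T ≠ U`.
-/

open Submodule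

section ModularLattice

variable {α : Type*} [Lattice α] [BoundedOrder α] [IsModularLattice α]

theorem sup_ne_top_of_lt_of_disjoint {t u w : α} (htu : t < u) (hwu : Disjoint w u) :
    t ⊔ w ≠ ⊤ := by
  intro h
  have hu : (t ⊔ w) ⊓ u = t ⊔ w ⊓ u := sup_inf_assoc_of_le w htu.le
  rw [h, top_inf_eq, hwu.eq_bot, sup_bot_eq] at hu
  exact htu.ne hu.symm

theorem not_disjoint_sup_of_not_disjoint_sup {t w x : α} (htw : Disjoint t w)
    (h : ¬ Disjoint t (x ⊔ w)) : ¬ Disjoint x (t ⊔ w) := fun hx =>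
  h (sup_comm w x ▸ htw.disjoint_sup_right_of_disjoint_sup_left hx.symm)

end ModularLattice

theorem not_disjoint_sup_of_disjoint_of_maximal {α : Type*} [Lattice α] [OrderBot α]
    {u w x : α} (hwmax : ∀ y, Disjoint y u → w ≤ y → y = w) (hx : x ≠ ⊥)
    (hxw : Disjoint x w) : ¬ Disjoint (x ⊔ w) u := fun h =>
  hx (hxw.eq_bot_of_le (sup_eq_right.mp (hwmax _ h le_sup_right)))

section DominatingSet

variable {R V : Type*} [Ring R] [AddCommGroup V] [Module R V]

theorem exists_ne_bot_ne_top_of_not_isSimpleModule [Nontrivial V]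
    (h : ¬ IsSimpleModule R V) : ∃ P : Submodule R V, P ≠ ⊥ ∧ P ≠ ⊤ := by
  by_contra! hP
  exact h ((isSimpleModule_iff R V).mpr (IsSimpleOrder.of_forall_eq_top hP))

theorem IsDominatingSet.exists_inf_ne_bot_of_properSubmodule {D : Set (ProperSubmodule R V)}
    (hD : IsDominatingSet R V D) (P : ProperSubmodule R V) : ∃ T ∈ D, T.1 ⊓ P.1 ≠ ⊥ := by
  by_cases hP : P ∈ D
  · exact ⟨P, hP, by rw [inf_idem]; exact P.2.1⟩
  · obtain ⟨T, hT, hadj⟩ := hD P hP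
    exact ⟨T, hT, by rw [inf_comm]; exact hadj.2⟩

theorem IsDominatingSet.exists_inf_ne_bot {D : Set (ProperSubmodule R V)}
    (hD : IsDominatingSet R V D) (hV : ¬ IsSimpleModule R V) {Y : Submodule R V}
    (hY : Y ≠ ⊥) : ∃ T ∈ D, T.1 ⊓ Y ≠ ⊥ := by
  by_cases hYtop : Y = ⊤
  · have : Nontrivial V := (Submodule.nontrivial_iff R).mp (nontrivial_of_ne Y ⊥ hY)
    obtain ⟨P, hP⟩ := exists_ne_bot_ne_top_of_not_isSimpleModule hV
    obtain ⟨T, hT, -⟩ := hD.exists_inf_ne_bot_of_properSubmodule ⟨P, hP⟩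
    exact ⟨T, hT, by rw [hYtop, inf_top_eq]; exact T.2.1⟩
  · exact hD.exists_inf_ne_bot_of_properSubmodule ⟨Y, hY, hYtop⟩

theorem not_disjoint_map_subtype {U X : Submodule R V} {T : Submodule R U}
    (h : T ⊓ X.comap U.subtype ≠ ⊥) : ¬ Disjoint (T.map U.subtype) X := by
  rw [disjoint_iff, map_inf_eq_map_inf_comap]
  simpa only [Submodule.map_bot] using (map_injective_of_injective U.injective_subtype).ne h

theorem map_subtype_sup_ne_bot_ne_top {U W : Submodule R V} (hWU : Disjoint W U) (T : ProperSubmodule R U) :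
    T.1.map U.subtype ⊔ W ≠ ⊥ ∧ T.1.map U.subtype ⊔ W ≠ ⊤ := by
  have hinj := map_injective_of_injective U.injective_subtype
  have hT_ne_bot : T.1.map U.subtype ≠ ⊥ := by
    simpa only [Submodule.map_bot] using hinj.ne T.2.1
  have hT_lt : T.1.map U.subtype < U := by
    refine lt_of_le_of_ne (map_subtype_le U T.1) ?_
    simpa only [map_subtype_top] using hinj.ne T.2.2
  exact ⟨ne_bot_of_le_ne_bot hT_ne_bot le_sup_left, sup_ne_top_of_lt_of_disjoint hT_lt hWU⟩

end DominatingSet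

theorem stmt10 (R V : Type*) [Ring R] [AddCommGroup V] [Module R V]
    (U : Submodule R V) (hU : U ≠ ⊥) (hUns : ¬ IsSimpleModule R U)
    (W : Submodule R V) (hWU : W ⊓ U = ⊥)
    (hWmax : ∀ X : Submodule R V, X ⊓ U = ⊥ → W ≤ X → X = W)
    (A : Set (ProperSubmodule R U)) (hA : IsDominatingSet R U A) :
    IsDominatingSet R V
      {v : ProperSubmodule R V | ∃ T ∈ A, v.1 = Submodule.map U.subtype T.1 ⊔ W} := by
  intro X hX
  obtain ⟨T, hT, hXT⟩ : ∃ T ∈ A, ¬ Disjoint X.1 (T.1.map U.subtype ⊔ W) := by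
    by_cases hXW : Disjoint X.1 W
    · have hXWU := not_disjoint_sup_of_disjoint_of_maximal
        (fun Y hY => hWmax Y hY.eq_bot) X.2.1 hXW
      have hY : (X.1 ⊔ W).comap U.subtype ≠ ⊥ := by
        rwa [Ne, ← disjoint_iff_comap_eq_bot, disjoint_comm]
      obtain ⟨T, hT, hTY⟩ := hA.exists_inf_ne_bot hUns hY
      have hTW : Disjoint (T.1.map U.subtype) W :=
        ((disjoint_iff.mpr hWU).mono_right (map_subtype_le U T.1)).symm
      exact ⟨T, hT, not_disjoint_sup_of_not_disjoint_sup hTW (not_disjoint_map_subtype hTY)⟩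
    · have : Nontrivial U := nontrivial_iff_ne_bot.mpr hU
      obtain ⟨T, hT, -⟩ := hA.exists_inf_ne_bot hUns (top_ne_bot (α := Submodule R U))
      exact ⟨T, hT, fun h => hXW (h.mono_right le_sup_right)⟩
  exact ⟨⟨_, map_subtype_sup_ne_bot_ne_top (disjoint_iff.mpr hWU) T⟩, ⟨T, hT, rfl⟩,
    fun h => hX ⟨T, hT, congrArg Subtype.val h⟩, fun h => hXT (disjoint_iff.mpr h)⟩
end

section
/- Let S be a simple R-module, n a natural number, and S_n the direct sum of n copies of S. Then the number of maximal R-submodules of S_n is (d^n − 1)/(d − 1), where d = |End_R(S)| (interpreted appropriately; in particular for n ≥ 2 this number is finite iff d is finite). -/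
/-!
A maximal submodule `N` of `Sⁿ` has simple quotient, and since `Sⁿ` is generated by the images
of the coordinate embeddings `S → Sⁿ`, one of them maps isomorphically onto `Sⁿ / N`; hence `N`
is the kernel of a nonzero map `Sⁿ → S`. Two nonzero maps `Sⁿ → S` have the same kernel exactly
when they differ by a nonzero element of `D = End_R(S)`, so the maximal submodules are the points
of the projective space of `Hom_R(Sⁿ, S) ≅ Dⁿ` over the division ring `D`. Finally,
`ℙ(D × V) ≃ V ⊕ ℙ(V)` (split by whether the first coordinate vanishes), so `|ℙ(Dⁿ)| = ∑_{k<n} dᵏ`.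
-/

open Cardinal LinearMap Finset
open scoped LinearAlgebra.Projectivization

namespace Projectivization

variable {K V W : Type*} [DivisionRing K] [AddCommGroup V] [Module K V]
  [AddCommGroup W] [Module K W]

def congr (e : V ≃ₗ[K] W) : ℙ K V ≃ ℙ K W where
  toFun := map e.toLinearMap e.injective
  invFun := map e.symm.toLinearMap e.symm.injective
  left_inv p := by induction p with | h v hv => simp [map_mk]
  right_inv p := by induction p with | h v hv => simp [map_mk]

variable (K V) in
noncomputable def sumEquivProd : V ⊕ ℙ K V ≃ ℙ K (K × V) :=
  Equiv.ofBijective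
    (Sum.elim (fun v => mk K ((1 : K), v) (by simp))
      (map (LinearMap.inr K K V) LinearMap.inr_injective)) <| by
    constructor
    · rintro (v | p) (w | q) h
      · obtain ⟨a, ha⟩ := (mk_eq_mk_iff' K _ _ _ _).1 h
        simp only [Prod.smul_mk, smul_eq_mul, mul_one, Prod.mk.injEq] at ha
        rw [← ha.2, ha.1, one_smul]
      · induction q with | h w hw =>
        obtain ⟨a, ha⟩ := (mk_eq_mk_iff' K _ _ _ _).1 h
        simp at ha
      · induction p with | h v hv =>
        obtain ⟨a, ha⟩ := (mk_eq_mk_iff' K _ _ _ _).1 h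
        simp only [LinearMap.inr_apply, Prod.smul_mk, smul_eq_mul, mul_one, Prod.mk.injEq] at ha
        simp [← ha.2, ha.1] at hv
      · exact congrArg Sum.inr (map_injective _ LinearMap.inr_injective h)
    · intro p
      induction p with | h x hx =>
      obtain ⟨a, v⟩ := x
      by_cases ha : a = 0
      · subst ha
        have hv : v ≠ 0 := by simpa using hx
        exact ⟨.inr (mk K v hv), rfl⟩
      · refine ⟨.inl (a⁻¹ • v), (mk_eq_mk_iff' K _ _ _ _).2 ⟨a⁻¹, ?_⟩⟩
        simp [inv_mul_cancel₀ ha]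

variable (K) in
theorem mk_fin_arrow (n : ℕ) : #(ℙ K (Fin n → K)) = ∑ k ∈ range n, #K ^ k := by
  induction n with
  | zero => simp
  | succ n ih =>
    rw [← mk_congr (congr (Fin.consLinearEquiv K fun _ => K)), ← mk_congr (sumEquivProd K _),
      mk_sum, lift_id, lift_id, ih, sum_range_succ, add_comm]
    simp

end Projectivization

theorem Cardinal.sum_range_pow_lt_aleph0_iff {c : Cardinal} {n : ℕ} (hn : 2 ≤ n) :
    ∑ k ∈ range n, c ^ k < ℵ₀ ↔ c < ℵ₀ := by
  constructor
  · intro h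
    refine lt_of_le_of_lt ?_ h
    simpa using single_le_sum (f := (c ^ ·)) (fun _ _ => zero_le) (mem_range.2 hn)
  · intro h
    obtain ⟨m, rfl⟩ := lt_aleph0.1 h
    exact_mod_cast natCast_lt_aleph0 (n := ∑ k ∈ range n, m ^ k)

theorem LinearMap.exists_comp_eq_of_ker_le {R M N P : Type*} [Ring R] [AddCommGroup M]
    [Module R M] [AddCommGroup N] [Module R N] [AddCommGroup P] [Module R P]
    {f : M →ₗ[R] N} (hf : Function.Surjective f) {g : M →ₗ[R] P} (h : ker f ≤ ker g) :
    ∃ c : N →ₗ[R] P, c ∘ₗ f = g :=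
  ⟨(ker f).liftQ g h ∘ₗ (f.quotKerEquivOfSurjective hf).symm.toLinearMap,
    LinearMap.ext fun x => by simp [quotKerEquivOfSurjective_symm_apply]⟩

namespace IsSimpleModule

variable {R S M : Type*} [Ring R] [AddCommGroup S] [Module R S] [IsSimpleModule R S]
  [AddCommGroup M] [Module R M]

theorem ker_smul {c : Module.End R S} (hc : c ≠ 0) (f : M →ₗ[R] S) : ker (c • f) = ker f :=
  ker_comp_of_ker_eq_bot f (ker_eq_bot_of_injective (injective_of_ne_zero hc))

theorem exists_smul_eq_of_ker_eq {f g : M →ₗ[R] S} (hf : f ≠ 0) (h : ker f = ker g) :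
    ∃ c : Module.End R S, c • f = g :=
  exists_comp_eq_of_ker_le (surjective_of_ne_zero hf) h.le

theorem exists_ker_eq_of_isCoatom {ι : Type*} [Finite ι] {N : Submodule R (ι → S)}
    (hN : IsCoatom N) : ∃ f : (ι → S) →ₗ[R] S, f ≠ 0 ∧ ker f = N := by
  classical
  have : IsSimpleModule R ((ι → S) ⧸ N) := isSimpleModule_iff_isCoatom.mpr hN
  obtain ⟨i, hi⟩ : ∃ i, N.mkQ ∘ₗ single R (fun _ => S) i ≠ 0 := by
    by_contra! h
    refine hN.1 ?_
    rw [← N.ker_mkQ, pi_ext' fun i => (h i).trans (zero_comp _).symm, ker_zero]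
  let e := LinearEquiv.ofBijective _ (bijective_of_ne_zero hi)
  have hker : ker (e.symm.toLinearMap ∘ₗ N.mkQ) = N := by simp
  exact ⟨_, fun h0 => hN.1 (by rw [← hker, h0, ker_zero]), hker⟩

-- Only needed for Mathlib's Schur-lemma instance `DivisionRing (Module.End R S)`.
variable [DecidableEq (Module.End R S)]

variable (R S M) in
noncomputable def kerCoatom :
    ℙ (Module.End R S) (M →ₗ[R] S) → {N : Submodule R M // IsCoatom N} :=
  Projectivization.lift
    (fun f => ⟨ker f.1, isCoatom_ker_of_surjective (surjective_of_ne_zero f.2)⟩)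
    fun f g c hfg => by
      have hc : c ≠ 0 := by rintro rfl; exact f.2 (by simpa using hfg)
      simp only [hfg, ker_smul hc]

theorem kerCoatom_injective : Function.Injective (kerCoatom R S M) := by
  intro p q h
  induction p with | h f hf =>
  induction q with | h g hg =>
  obtain ⟨c, hc⟩ := exists_smul_eq_of_ker_eq hg (congrArg Subtype.val h).symm
  exact (Projectivization.mk_eq_mk_iff' _ _ _ _ _).2 ⟨c, hc⟩

theorem kerCoatom_surjective {ι : Type*} [Finite ι] :
    Function.Surjective (kerCoatom R S (ι → S)) := by
  rintro ⟨N, hN⟩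
  obtain ⟨f, hf, rfl⟩ := exists_ker_eq_of_isCoatom hN
  exact ⟨Projectivization.mk _ f hf, rfl⟩

end IsSimpleModule

/-- The number of maximal submodules of `Sⁿ` is `(dⁿ-1)/(d-1) = 1 + d + ⋯ + dⁿ⁻¹`
where `d = |End_R(S)|` (stated as a cardinal identity, which interprets the
formula appropriately also for infinite `d`); in particular for `n ≥ 2` it is
finite iff `d` is finite. -/
theorem stmt14 (R S : Type*) [Ring R] [AddCommGroup S] [Module R S]
    [IsSimpleModule R S] (n : ℕ) :
    Cardinal.mk {M : Submodule R (Fin n → S) // IsCoatom M} =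
        ∑ k ∈ Finset.range n, Cardinal.mk (Module.End R S) ^ k ∧
      (2 ≤ n →
        (Finite {M : Submodule R (Fin n → S) // IsCoatom M} ↔
          Finite (Module.End R S))) := by
  classical
  let e : ℙ (Module.End R S) (Fin n → Module.End R S) ≃
      {M : Submodule R (Fin n → S) // IsCoatom M} :=
    (Projectivization.congr (lsum R (fun _ => S) (Module.End R S))).trans
      (Equiv.ofBijective _
        ⟨IsSimpleModule.kerCoatom_injective, IsSimpleModule.kerCoatom_surjective⟩)
  have hcard := (mk_congr e).symm.trans (Projectivization.mk_fin_arrow _ n)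
  refine ⟨hcard, fun hn => ?_⟩
  rw [← lt_aleph0_iff_finite, ← lt_aleph0_iff_finite, hcard, sum_range_pow_lt_aleph0_iff hn]
end

section
/- Let V be a semisimple R-module of even composition length 2k such that some simple R-module has odd multiplicity as a composition factor of V. Then for any three R-submodules W_1, W_2, W_3 of V each of composition length k, at least one of the intersections W_1 ∩ W_2, W_1 ∩ W_3, W_2 ∩ W_3 is nonzero. -/
/-!
Suppose `W₁, W₂, W₃` pairwise intersect trivially. Two disjoint submodules of length `k` in a
module of length `2k` are complementary, so the three are pairwise complements. The isotypic
component `S` of a simple type of odd multiplicity `m` is fully invariant, so it is stable under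
the projections of every decomposition `V = Wᵢ ⊕ Wⱼ`; hence `S = (S ⊓ Wᵢ) ⊕ (S ⊓ Wⱼ)` and
`aᵢ + aⱼ = m` for `aᵢ = length (S ⊓ Wᵢ)`. Solving the three equations gives `m = 2 a₁`,
contradicting the oddness of `m`.
-/

universe u v

/-- A module has composition length `i` if it has a composition series of length `i`. -/
def hasLength (R M : Type*) [Ring R] [AddCommGroup M] [Module R M] (i : ℕ) : Prop :=
  ∃ s : RelSeries {p : Submodule R M × Submodule R M | p.1 ⋖ p.2},
    s.head = ⊥ ∧ s.last = ⊤ ∧ s.length = i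

open Module

theorem ENat.even_of_add_eq {a b c : ℕ∞} {m : ℕ} (hab : (m : ℕ∞) = a + b)
    (hac : (m : ℕ∞) = a + c) (hbc : (m : ℕ∞) = b + c) : Even m := by
  have ha : a ≠ ⊤ := fun h => by simp [h] at hab
  have hb : b ≠ ⊤ := fun h => by simp [h] at hbc
  have hc : c ≠ ⊤ := fun h => by simp [h] at hbc
  lift a to ℕ using ha
  lift b to ℕ using hb
  lift c to ℕ using hc
  norm_cast at hab hac hbc
  exact ⟨b, by omega⟩

section Length

variable {R M : Type*} [Ring R] [AddCommGroup M] [Module R M]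

theorem length_eq_of_hasLength {i : ℕ} (h : hasLength R M i) : length R M = i := by
  obtain ⟨s, h₁, h₂, rfl⟩ := h
  exact (length_compositionSeries s h₁ h₂).symm

theorem Submodule.length_sup_of_disjoint {A B : Submodule R M} (h : Disjoint A B) :
    length R ↥(A ⊔ B) = length R A + length R B := by
  have hinj : Function.Injective (A.subtype.coprod B.subtype) := by
    rw [← LinearMap.ker_eq_bot, LinearMap.ker_coprod_of_disjoint_range _ _
      (by simpa only [Submodule.range_subtype] using h)]
    simp
  rw [Submodule.sup_eq_range, ← (LinearEquiv.ofInjective _ hinj).length_eq, length_prod]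

theorem Submodule.isCompl_of_length_add_eq [IsArtinian R M] [IsNoetherian R M]
    {A B : Submodule R M} (hd : Disjoint A B) (h : length R A + length R B = length R M) :
    IsCompl A B := by
  refine ⟨hd, codisjoint_iff.2 (by_contra fun hne => ?_)⟩
  have := Submodule.length_lt hne
  rw [Submodule.length_sup_of_disjoint hd, h] at this
  exact this.false

theorem Submodule.IsFullyInvariant.inf_sup_inf_of_isCompl {N A B : Submodule R M}
    (hN : N.IsFullyInvariant) (h : IsCompl A B) : N ⊓ A ⊔ N ⊓ B = N := by
  refine le_antisymm (sup_le inf_le_left inf_le_left) fun x hx => ?_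
  rw [← Submodule.projection_add_projection_eq_self h x]
  exact Submodule.add_mem_sup ⟨hN _ hx, Submodule.projection_apply_mem h x⟩
    ⟨hN _ hx, Submodule.projection_apply_mem h.symm x⟩

theorem Submodule.IsFullyInvariant.length_eq_add_of_isCompl {N A B : Submodule R M}
    (hN : N.IsFullyInvariant) (h : IsCompl A B) :
    length R N = length R ↥(N ⊓ A) + length R ↥(N ⊓ B) := by
  have hd : Disjoint (N ⊓ A) (N ⊓ B) := h.disjoint.mono inf_le_right inf_le_right
  have := Submodule.length_sup_of_disjoint hd
  rwa [hN.inf_sup_inf_of_isCompl h] at this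

theorem Submodule.IsFullyInvariant.even_length_of_isCompl {N A B C : Submodule R M}
    (hN : N.IsFullyInvariant) (hAB : IsCompl A B) (hAC : IsCompl A C) (hBC : IsCompl B C)
    {m : ℕ} (hm : length R N = m) : Even m :=
  ENat.even_of_add_eq (hm ▸ hN.length_eq_add_of_isCompl hAB)
    (hm ▸ hN.length_eq_add_of_isCompl hAC) (hm ▸ hN.length_eq_add_of_isCompl hBC)

end Length

section Isotypic

variable {R M N S : Type*} [Ring R] [AddCommGroup M] [Module R M] [AddCommGroup N] [Module R N]
  [AddCommGroup S] [Module R S]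

theorem LinearEquiv.map_isotypicComponent [IsSimpleModule R S] (e : M ≃ₗ[R] N) :
    (isotypicComponent R M S).map (e : M →ₗ[R] N) = isotypicComponent R N S := by
  refine le_antisymm (Submodule.map_le_iff_le_comap.2 (LinearMap.le_comap_isotypicComponent S _))
    ?_
  rw [Submodule.map_equiv_eq_comap_symm]
  exact LinearMap.le_comap_isotypicComponent S _

theorem isotypicComponent_eq_bot_of_not_nonempty [IsSimpleModule R M] [IsSimpleModule R S]
    (h : ¬ Nonempty (M ≃ₗ[R] S)) : isotypicComponent R M S = ⊥ := by
  refine sSup_eq_bot.2 fun m ⟨f⟩ => (eq_bot_or_eq_top m).resolve_right fun hm => h ?_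
  exact ⟨Submodule.topEquiv.symm.trans ((LinearEquiv.ofEq _ _ hm).symm.trans f)⟩

theorem LinearMap.range_le_isotypicComponent_of_injective {f : S →ₗ[R] M}
    (hf : Function.Injective f) : LinearMap.range f ≤ isotypicComponent R M S :=
  le_sSup ⟨(LinearEquiv.ofInjective f hf).symm⟩

variable {ι : Type*} [DecidableEq ι] (T : ι → Type*) [∀ i, AddCommGroup (T i)]
  [∀ i, Module R (T i)] [∀ i, IsSimpleModule R (T i)]

theorem isotypicComponent_pi_eq_range_single
    (hT : ∀ i j, i ≠ j → ¬ Nonempty (T i ≃ₗ[R] T j)) (n : ι → ℕ) (j : ι) :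
    isotypicComponent R (Π i, Fin (n i) → T i) (T j) =
      LinearMap.range (LinearMap.single R (fun i => Fin (n i) → T i) j) := by
  apply le_antisymm
  · intro x hx
    have hx_ne : ∀ i, i ≠ j → x i = 0 := fun i hi => funext fun l => by
      have := LinearMap.le_comap_isotypicComponent (T j)
        (LinearMap.proj l ∘ₗ LinearMap.proj (φ := fun i => Fin (n i) → T i) i) hx
      rwa [Submodule.mem_comap, isotypicComponent_eq_bot_of_not_nonempty (hT i j hi)] at this
    refine ⟨x j, funext fun i => ?_⟩
    rcases eq_or_ne i j with rfl | hi
    · simp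
    · simp [hi, hx_ne i hi]
  · rw [LinearMap.range_eq_map, ← LinearMap.iSup_range_single, Submodule.map_iSup]
    refine iSup_le fun l => ?_
    rw [← LinearMap.range_comp]
    exact LinearMap.range_le_isotypicComponent_of_injective
      ((Pi.single_injective (M := fun i => Fin (n i) → T i) j).comp
        (Pi.single_injective (M := fun _ => T j) l))

theorem length_isotypicComponent_pi
    (hT : ∀ i j, i ≠ j → ¬ Nonempty (T i ≃ₗ[R] T j)) (n : ι → ℕ) (j : ι) :
    length R (isotypicComponent R (Π i, Fin (n i) → T i) (T j)) = n j := by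
  rw [isotypicComponent_pi_eq_range_single T hT,
    ← (LinearEquiv.ofInjective _ (Pi.single_injective (M := fun i => Fin (n i) → T i) j)).length_eq]
  simp

end Isotypic

theorem stmt19_general (R : Type u) [Ring R] (V : Type v) [AddCommGroup V] [Module R V]
    (k : ℕ)
    (r : ℕ) (T : Fin r → Type v) [∀ i, AddCommGroup (T i)] [∀ i, Module R (T i)]
    (hT : ∀ i, IsSimpleModule R (T i))
    (hTne : ∀ i j, i ≠ j → ¬ Nonempty (T i ≃ₗ[R] T j))
    (n : Fin r → ℕ)
    (e : V ≃ₗ[R] Π i, (Fin (n i) → T i))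
    (hlen : ∑ i, n i = 2 * k) (hodd : ∃ i, Odd (n i))
    (W₁ W₂ W₃ : Submodule R V)
    (h1 : hasLength R W₁ k) (h2 : hasLength R W₂ k) (h3 : hasLength R W₃ k) :
    W₁ ⊓ W₂ ≠ ⊥ ∨ W₁ ⊓ W₃ ≠ ⊥ ∨ W₂ ⊓ W₃ ≠ ⊥ := by
  obtain ⟨j, hj⟩ := hodd
  have hV : length R V = (2 * k : ℕ) := by
    rw [e.length_eq, length_pi_of_fintype, ← hlen]
    simp
  obtain ⟨_, _⟩ := isFiniteLength_iff_isNoetherian_isArtinian.1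
    (length_ne_top_iff.1 (hV ▸ ENat.natCast_ne_top _))
  have hcompl {A B : Submodule R V} (hA : hasLength R A k) (hB : hasLength R B k)
      (hAB : A ⊓ B = ⊥) : IsCompl A B := by
    refine Submodule.isCompl_of_length_add_eq (disjoint_iff.2 hAB) ?_
    rw [length_eq_of_hasLength hA, length_eq_of_hasLength hB, hV]
    push_cast
    ring
  have hS : length R (isotypicComponent R V (T j)) = n j := by
    rw [(e.submoduleMap _).length_eq, e.map_isotypicComponent,
      length_isotypicComponent_pi T hTne]
  by_contra! h
  exact Nat.not_even_iff_odd.2 hj <| (Submodule.IsFullyInvariant.isotypicComponent R V (T j))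
    |>.even_length_of_isCompl (hcompl h1 h2 h.1) (hcompl h1 h3 h.2.1) (hcompl h2 h3 h.2.2) hS

/-- If `V` is a semisimple module of composition length `2k` in which some simple
module occurs with odd multiplicity (witnessed by a decomposition
`V ≅ n₁T₁ ⊕ ⋯ ⊕ n_rT_r` with `∑ nᵢ = 2k` and some `nᵢ` odd), then among any three
submodules of composition length `k`, two have nonzero intersection. -/
theorem stmt19 (R : Type u) [Ring R] (V : Type v) [AddCommGroup V] [Module R V]
    [IsSemisimpleModule R V] (k : ℕ) (hk : 0 < k)
    (r : ℕ) (T : Fin r → Type v) [∀ i, AddCommGroup (T i)] [∀ i, Module R (T i)]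
    (hT : ∀ i, IsSimpleModule R (T i))
    (hTne : ∀ i j, i ≠ j → ¬ Nonempty (T i ≃ₗ[R] T j))
    (n : Fin r → ℕ) (hn : ∀ i, 0 < n i)
    (e : V ≃ₗ[R] Π i, (Fin (n i) → T i))
    (hlen : ∑ i, n i = 2 * k) (hodd : ∃ i, Odd (n i))
    (W₁ W₂ W₃ : Submodule R V)
    (h1 : hasLength R W₁ k) (h2 : hasLength R W₂ k) (h3 : hasLength R W₃ k) :
    W₁ ⊓ W₂ ≠ ⊥ ∨ W₁ ⊓ W₃ ≠ ⊥ ∨ W₂ ⊓ W₃ ≠ ⊥ :=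
  stmt19_general R V k r T hT hTne n e hlen hodd W₁ W₂ W₃ h1 h2 h3
end
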